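/- arXiv:math/0311263 — 4 statements merged into one kernel-verified Lean document; each statement's English description precedes it below -/
import Mathlib

section
/- Let A be an Osserman algebraic curvature tensor on V. If for every unit vector x the reduced Jacobi operator J̃_A(x) has only one eigenvalue λ, then A = λ·A_Id, where A_Id(x,y,z,w) = g(x,w)g(y,z) − g(x,z)g(y,w). -/
open RealInnerProductSpace

open Module.End in
lemma spec_aux {W : Type*} [NormedAddCommGroup W] [InnerProductSpace ℝ W]
    [FiniteDimensional ℝ W] (T : W →ₗ[ℝ] W) (hT : T.IsSymmetric) (lam : ℝ)
    (h : ∀ μ : ℝ, Module.End.HasEigenvalue T μ ↔ μ = lam) :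
    ∀ v : W, T v = lam • v := by
  have htop : (⨆ μ : ℝ, eigenspace T μ) = ⊤ := by
    have := hT.orthogonalComplement_iSup_eigenspaces_eq_bot
    rwa [Submodule.orthogonal_eq_bot_iff] at this
  have hle : (⨆ μ : ℝ, eigenspace T μ) ≤ eigenspace T lam := by
    apply iSup_le
    intro μ
    by_cases hμ : Module.End.HasEigenvalue T μ
    · rw [(h μ).mp hμ]
    · have : eigenspace T μ = ⊥ := not_not.mp hμ
      rw [this]; exact bot_le
  intro v
  have : v ∈ eigenspace T lam := hle (htop ▸ Submodule.mem_top)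
  simpa [Module.End.mem_eigenspace_iff] using this

/-- Chi's classification: an Osserman algebraic curvature tensor whose reduced
Jacobi operator has only one eigenvalue `lam` at every unit vector is `lam • A_Id`. -/
theorem stmt_2 {V : Type*} [NormedAddCommGroup V] [InnerProductSpace ℝ V]
    [FiniteDimensional ℝ V]
    (A : V →ₗ[ℝ] V →ₗ[ℝ] V →ₗ[ℝ] V →ₗ[ℝ] ℝ)
    (hA1 : ∀ x y z w : V, A x y z w = - A y x z w)
    (hA2 : ∀ x y z w : V, A x y z w = A z w x y)
    (hA3 : ∀ x y z w : V, A x y z w + A y z x w + A z x y w = 0)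
    (J : V → V →ₗ[ℝ] V)
    (hJ : ∀ x y z : V, ⟪J x y, z⟫ = A y x x z)
    (hinv : ∀ x : V, ∀ y ∈ (Submodule.span ℝ {x})ᗮ, J x y ∈ (Submodule.span ℝ {x})ᗮ)
    (hOss : ∀ x y : V, ‖x‖ = 1 → ‖y‖ = 1 → (J x).charpoly = (J y).charpoly)
    (lam : ℝ)
    (hone : ∀ x : V, ‖x‖ = 1 →
      ∀ μ : ℝ, Module.End.HasEigenvalue ((J x).restrict (hinv x)) μ ↔ μ = lam) :
    ∀ x y z w : V, A x y z w = lam * (⟪x, w⟫ * ⟪y, z⟫ - ⟪x, z⟫ * ⟪y, w⟫) := by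
  -- antisymmetry in the last two slots
  have hA1' : ∀ x y z w : V, A x y z w = - A x y w z := by
    intro x y z w
    rw [hA2, hA1, hA2]
  -- symmetry of the Jacobi operator
  have hsymm : ∀ x y z : V, A y x x z = A z x x y := by
    intro x y z
    rw [hA2, hA1', hA1]
    ring_nf
  -- key: for unit x, J x acts as lam on x^⊥
  have hkey : ∀ x : V, ‖x‖ = 1 → ∀ y z : V,
      A y x x z = lam * (⟪y, z⟫ - ⟪x, y⟫ * ⟪x, z⟫) := by
    intro x hx y z
    set T := (J x).restrict (hinv x) with hT
    have hTsym : T.IsSymmetric := by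
      intro u v
      rw [Submodule.coe_inner, Submodule.coe_inner]
      show ⟪J x (u : V), (v : V)⟫ = ⟪(u : V), J x (v : V)⟫
      rw [hJ, real_inner_comm, hJ, hsymm]
    have heig := spec_aux T hTsym lam (hone x hx)
    -- decompose y
    have hxx : ⟪x, x⟫ = 1 := by
      rw [real_inner_self_eq_norm_sq, hx]; norm_num
    set y' := y - ⟪x, y⟫ • x with hy'
    have hmem : y' ∈ (Submodule.span ℝ {x})ᗮ := by
      rw [Submodule.mem_orthogonal_singleton_iff_inner_right]
      rw [hy', inner_sub_right, real_inner_smul_right, hxx]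
      ring
    have hJy' : J x y' = lam • y' := by
      have := heig ⟨y', hmem⟩
      have h2 := congrArg (Subtype.val) this
      simpa [hT] using h2
    have hJxx : ∀ w : V, ⟪J x x, w⟫ = 0 := by
      intro w
      rw [hJ]
      have := hA1 x x x w
      linarith
    have hdec : y = ⟪x, y⟫ • x + y' := by rw [hy']; abel
    have hJy : J x y = ⟪x, y⟫ • J x x + lam • y' := by
      conv_lhs => rw [hdec]
      rw [map_add, map_smul, hJy']
    rw [← hJ, hJy, inner_add_left, real_inner_smul_left, hJxx, real_inner_smul_left,
      hy', inner_sub_left, real_inner_smul_left]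
    ring
  -- homogeneous version for all x
  have hkey2 : ∀ x y z : V,
      A y x x z = lam * (⟪x, x⟫ * ⟪y, z⟫ - ⟪x, y⟫ * ⟪x, z⟫) := by
    intro x y z
    by_cases hx : x = 0
    · simp [hx]
    · have hc : ‖x‖ ≠ 0 := norm_ne_zero_iff.mpr hx
      set u := ‖x‖⁻¹ • x with hu
      have hun : ‖u‖ = 1 := by
        rw [hu, norm_smul]
        simp [abs_of_nonneg (norm_nonneg x), inv_mul_cancel₀ hc]
      have hxu : x = ‖x‖ • u := by
        rw [hu, smul_smul, mul_inv_cancel₀ hc, one_smul]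
      have h1 := hkey u hun y z
      rw [hxu]
      simp only [map_smul, LinearMap.smul_apply, real_inner_smul_left,
        real_inner_smul_right, smul_eq_mul]
      have huu : ⟪u, u⟫ = 1 := by
        rw [real_inner_self_eq_norm_sq, hun]; norm_num
      rw [h1, huu]
      ring
  -- polarization
  have hpol : ∀ a b c d : V, A a b c d + A a c b d =
      lam * (2 * ⟪b, c⟫ * ⟪a, d⟫ - ⟪b, a⟫ * ⟪c, d⟫ - ⟪c, a⟫ * ⟪b, d⟫) := by
    intro a b c d
    have h1 := hkey2 (b + c) a d
    have h2 := hkey2 b a d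
    have h3 := hkey2 c a d
    simp only [map_add, LinearMap.add_apply, inner_add_left, inner_add_right] at h1
    linear_combination h1 - h2 - h3 - (lam*⟪a, d⟫) * real_inner_comm c b
  -- the difference tensor B
  set B : V → V → V → V → ℝ := fun x y z w =>
    A x y z w - lam * (⟪x, w⟫ * ⟪y, z⟫ - ⟪x, z⟫ * ⟪y, w⟫) with hBdef
  have hB12 : ∀ a b c d : V, B a b c d = - B b a c d := by
    intro a b c d
    simp only [hBdef]
    rw [hA1 a b c d]
    ring
  have hB23 : ∀ a b c d : V, B a b c d = - B a c b d := by
    intro a b c d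
    simp only [hBdef]
    have h := hpol a b c d
    linear_combination h + (lam*⟪a, d⟫) * real_inner_comm c b
      + (lam*⟪b, d⟫) * real_inner_comm c a + (lam*⟪c, d⟫) * real_inner_comm b a
  have hB3 : ∀ x y z w : V, B x y z w + B y z x w + B z x y w = 0 := by
    intro x y z w
    simp only [hBdef]
    linear_combination hA3 x y z w + (lam*⟪x, w⟫) * real_inner_comm y z
      + (lam*⟪y, w⟫) * real_inner_comm z x + (lam*⟪z, w⟫) * real_inner_comm x y
  intro x y z w
  have b := hB3 x y z w
  have e1 : B y z x w = B x y z w := by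
    rw [hB23 y z x w, hB12 y x z w]; ring
  have e2 : B z x y w = B x y z w := by
    rw [hB12 z x y w, hB23 x z y w]; ring
  rw [e1, e2] at b
  have hB0 : B x y z w = 0 := by linarith
  simp only [hBdef] at hB0
  linarith
end

section
/- Under the differentiated second Bianchi hypothesis stated in the context, whenever {a, Φa, b, Φb, c, Φc} is an orthonormal set in V, one has g(Φ'_c b − Φ'_b c, a) = 0. -/
/-!
Since `dim V ≥ 8`, there is a nonzero `d` orthogonal to `a, Φa, b, Φb, c, Φc`. Evaluating the
Bianchi identity at `(b, c, d; a)` and pairing with `Φd`, every term vanishes by orthogonality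
(`Φ` being an isometry) except the two multiples of `Φd`, which leave `l₁ ‖d‖² ⟪Φ'_c b - Φ'_b c, a⟫ = 0`.
-/

open RealInnerProductSpace

/-- One cyclic-summand of the differentiated second Bianchi identity for a
curvature tensor of conformally-complex-space-form type. -/
noncomputable def bianchiTerm {V : Type*} [NormedAddCommGroup V] [InnerProductSpace ℝ V]
    (c₁ c₂ l₁ : ℝ) (τ' : V →ₗ[ℝ] ℝ) (ρ' Φ' : V →ₗ[ℝ] V →ₗ[ℝ] V)
    (Φ : V →ₗ[ℝ] V) (x y z w : V) : V :=
  (c₁ * τ' x) • (⟪z, w⟫ • y - ⟪y, w⟫ • z) +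
    c₂ • (⟪ρ' x z, w⟫ • y - ⟪ρ' x y, w⟫ • z + ⟪z, w⟫ • ρ' x y - ⟪y, w⟫ • ρ' x z) +
    l₁ • (⟪Φ' x z, w⟫ • Φ y + ⟪Φ z, w⟫ • Φ' x y - ⟪Φ' x y, w⟫ • Φ z -
      ⟪Φ y, w⟫ • Φ' x z - (2 * ⟪Φ' x y, z⟫) • Φ w - (2 * ⟪Φ y, z⟫) • Φ' x w)

section

variable {V : Type*} [NormedAddCommGroup V] [InnerProductSpace ℝ V]

theorem exists_ne_zero_forall_inner_eq_zero {ι : Type*} [Fintype ι] (v : ι → V)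
    (h : Fintype.card ι < Module.finrank ℝ V) : ∃ d ≠ 0, ∀ i, ⟪v i, d⟫ = 0 := by
  have : FiniteDimensional ℝ V := Module.finite_of_finrank_pos (by omega)
  let f : V →ₗ[ℝ] ι → ℝ := LinearMap.pi fun i => innerₛₗ ℝ (v i)
  obtain ⟨d, hd, hd0⟩ := Submodule.ne_bot_iff _ |>.mp <|
    LinearMap.ker_ne_bot_of_finrank_lt (f := f) (by rwa [Module.finrank_fintype_fun_eq_card])
  exact ⟨d, hd0, fun i => congrFun (LinearMap.mem_ker.mp hd) i⟩

theorem inner_bianchiTerm_cyclic_sum_eq {Φ : V →ₗ[ℝ] V}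
    (hskew : ∀ u v : V, ⟪Φ u, v⟫ = -⟪u, Φ v⟫) (hsq : ∀ v : V, Φ (Φ v) = -v)
    (c₁ c₂ l₁ : ℝ) (τ' : V →ₗ[ℝ] ℝ) (ρ' Φ' : V →ₗ[ℝ] V →ₗ[ℝ] V) {a b c d : V}
    (habc : Pairwise fun i j => ⟪![a, Φ a, b, Φ b, c, Φ c] i, ![a, Φ a, b, Φ b, c, Φ c] j⟫ = 0)
    (hd : ∀ i, ⟪![a, Φ a, b, Φ b, c, Φ c] i, d⟫ = 0) :
    ⟪bianchiTerm c₁ c₂ l₁ τ' ρ' Φ' Φ b c d a + bianchiTerm c₁ c₂ l₁ τ' ρ' Φ' Φ c d b a +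
        bianchiTerm c₁ c₂ l₁ τ' ρ' Φ' Φ d b c a, Φ d⟫ =
      l₁ * ⟪d, d⟫ * ⟪Φ' c b - Φ' b c, a⟫ := by
  have hΦΦ : ∀ u v, ⟪Φ u, Φ v⟫ = ⟪u, v⟫ := fun u v => by
    rw [hskew, hsq, inner_neg_right, neg_neg]
  have had : ⟪a, d⟫ = 0 := hd 0
  have hΦad : ⟪Φ a, d⟫ = 0 := hd 1
  have hbd : ⟪b, d⟫ = 0 := hd 2
  have hΦbd : ⟪Φ b, d⟫ = 0 := hd 3
  have hcd : ⟪c, d⟫ = 0 := hd 4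
  have hΦcd : ⟪Φ c, d⟫ = 0 := hd 5
  have hba : ⟪b, a⟫ = 0 := by simpa using habc (show (2 : Fin 6) ≠ 0 by decide)
  have hca : ⟪c, a⟫ = 0 := by simpa using habc (show (4 : Fin 6) ≠ 0 by decide)
  have hΦba : ⟪Φ b, a⟫ = 0 := by simpa using habc (show (3 : Fin 6) ≠ 0 by decide)
  have hΦca : ⟪Φ c, a⟫ = 0 := by simpa using habc (show (5 : Fin 6) ≠ 0 by decide)
  have hΦbc : ⟪Φ b, c⟫ = 0 := by simpa using habc (show (3 : Fin 6) ≠ 4 by decide)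
  have hda : ⟪d, a⟫ = 0 := by rw [real_inner_comm, had]
  have hΦda : ⟪Φ d, a⟫ = 0 := by rw [hskew, real_inner_comm, hΦad, neg_zero]
  have hΦdb : ⟪Φ d, b⟫ = 0 := by rw [hskew, real_inner_comm, hΦbd, neg_zero]
  have hbΦd : ⟪b, Φ d⟫ = 0 := by linarith [hskew b d]
  have hcΦd : ⟪c, Φ d⟫ = 0 := by linarith [hskew c d]
  have hdΦd : ⟪d, Φ d⟫ = 0 := by linarith [hskew d d, real_inner_comm d (Φ d)]
  simp only [bianchiTerm, inner_add_left, inner_sub_left, real_inner_smul_left]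
  simp only [hΦΦ, hba, hca, hΦba, hΦca, hΦbc, hda, hΦda, hΦdb, hbΦd, hcΦd, hdΦd, had, hbd, hcd, hΦcd]
  ring

end

theorem stmt_12_general {V : Type*} [NormedAddCommGroup V] [InnerProductSpace ℝ V]
    (m : ℕ) (hm : Module.finrank ℝ V = m) (hm8 : 8 ≤ m)
    (Φ : V →ₗ[ℝ] V)
    (hskew : ∀ u v : V, ⟪Φ u, v⟫ = -⟪u, Φ v⟫)
    (hsq : ∀ v : V, Φ (Φ v) = -v)
    (l₁ : ℝ) (hl₁ : l₁ ≠ 0)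
    (τ' : V →ₗ[ℝ] ℝ) (ρ' Φ' : V →ₗ[ℝ] V →ₗ[ℝ] V)
    (hB : ∀ x y z w : V,
      bianchiTerm (-1 / (((m : ℝ) - 1) * ((m : ℝ) - 2))) (1 / ((m : ℝ) - 2)) l₁ τ' ρ' Φ' Φ x y z w +
        bianchiTerm (-1 / (((m : ℝ) - 1) * ((m : ℝ) - 2))) (1 / ((m : ℝ) - 2)) l₁ τ' ρ' Φ' Φ y z x w +
        bianchiTerm (-1 / (((m : ℝ) - 1) * ((m : ℝ) - 2))) (1 / ((m : ℝ) - 2)) l₁ τ' ρ' Φ' Φ z x y w = 0) :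
    ∀ a b c : V, Orthonormal ℝ ![a, Φ a, b, Φ b, c, Φ c] →
      ⟪Φ' c b - Φ' b c, a⟫ = 0 := by
  intro a b c hon
  obtain ⟨d, hd0, hd⟩ := exists_ne_zero_forall_inner_eq_zero ![a, Φ a, b, Φ b, c, Φ c]
    (by rw [Fintype.card_fin, hm]; omega)
  have key := inner_bianchiTerm_cyclic_sum_eq hskew hsq (-1 / (((m : ℝ) - 1) * ((m : ℝ) - 2)))
    (1 / ((m : ℝ) - 2)) l₁ τ' ρ' Φ' (fun _ _ hij => hon.inner_eq_zero hij) hd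
  rw [hB, inner_zero_left, eq_comm] at key
  exact (mul_eq_zero.mp key).resolve_left (mul_ne_zero hl₁ (inner_self_ne_zero.mpr hd0))

/-- Under the differentiated second Bianchi hypothesis, for any orthonormal set
`{a, Φa, b, Φb, c, Φc}` one has `⟪Φ'_c b - Φ'_b c, a⟫ = 0`. -/
theorem stmt_12 {V : Type*} [NormedAddCommGroup V] [InnerProductSpace ℝ V]
    [FiniteDimensional ℝ V]
    (m : ℕ) (hm : Module.finrank ℝ V = m) (hm8 : 8 ≤ m)
    (Φ : V →ₗ[ℝ] V)
    (hskew : ∀ u v : V, ⟪Φ u, v⟫ = -⟪u, Φ v⟫)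
    (hsq : ∀ v : V, Φ (Φ v) = -v)
    (l₁ : ℝ) (hl₁ : l₁ ≠ 0)
    (τ' : V →ₗ[ℝ] ℝ) (ρ' Φ' : V →ₗ[ℝ] V →ₗ[ℝ] V)
    (hΦ'skew : ∀ x u v : V, ⟪Φ' x u, v⟫ = -⟪u, Φ' x v⟫)
    (hΦ'anti : ∀ x v : V, Φ' x (Φ v) = -Φ (Φ' x v))
    (hρ'sym : ∀ x u v : V, ⟪ρ' x u, v⟫ = ⟪u, ρ' x v⟫)
    (hB : ∀ x y z w : V,
      bianchiTerm (-1 / (((m : ℝ) - 1) * ((m : ℝ) - 2))) (1 / ((m : ℝ) - 2)) l₁ τ' ρ' Φ' Φ x y z w +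
        bianchiTerm (-1 / (((m : ℝ) - 1) * ((m : ℝ) - 2))) (1 / ((m : ℝ) - 2)) l₁ τ' ρ' Φ' Φ y z x w +
        bianchiTerm (-1 / (((m : ℝ) - 1) * ((m : ℝ) - 2))) (1 / ((m : ℝ) - 2)) l₁ τ' ρ' Φ' Φ z x y w = 0) :
    ∀ a b c : V, Orthonormal ℝ ![a, Φ a, b, Φ b, c, Φ c] →
      ⟪Φ' c b - Φ' b c, a⟫ = 0 :=
  stmt_12_general m hm hm8 Φ hskew hsq l₁ hl₁ τ' ρ' Φ' hB
end

section
/- Under the differentiated second Bianchi hypothesis stated in the context, one has Φ'_a a = 0 and Φ'_a (Φa) = 0 for every a ∈ V, and Φ'_a b + Φ'_b a = 0 for all a, b ∈ V. -/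
open RealInnerProductSpace

lemma exists_orth6 {V : Type*} [NormedAddCommGroup V] [InnerProductSpace ℝ V]
    [FiniteDimensional ℝ V] (h6 : 6 < Module.finrank ℝ V) (a b c d e f : V) :
    ∃ w : V, w ≠ 0 ∧ ⟪w, a⟫ = 0 ∧ ⟪w, b⟫ = 0 ∧ ⟪w, c⟫ = 0 ∧ ⟪w, d⟫ = 0 ∧
      ⟪w, e⟫ = 0 ∧ ⟪w, f⟫ = 0 := by
  classical
  set s : Finset V := {a, b, c, d, e, f} with hs
  have hcard : s.card ≤ 6 := by
    refine (Finset.card_insert_le _ _).trans (Nat.add_le_add_right ?_ 1)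
    refine (Finset.card_insert_le _ _).trans (Nat.add_le_add_right ?_ 1)
    refine (Finset.card_insert_le _ _).trans (Nat.add_le_add_right ?_ 1)
    refine (Finset.card_insert_le _ _).trans (Nat.add_le_add_right ?_ 1)
    refine (Finset.card_insert_le _ _).trans (Nat.add_le_add_right ?_ 1)
    simp
  set K : Submodule ℝ V := Submodule.span ℝ (s : Set V) with hK
  have hKlt : K < ⊤ := by
    apply Submodule.lt_top_of_finrank_lt_finrank
    exact lt_of_le_of_lt (((finrank_span_finset_le_card s : (s : Set V).finrank ℝ ≤ s.card)).trans hcard) h6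
  have hne : Kᗮ ≠ ⊥ := by
    intro hbot
    exact hKlt.ne (Submodule.orthogonal_eq_bot_iff.mp hbot)
  obtain ⟨w, hwK, hw0⟩ := Submodule.exists_mem_ne_zero_of_ne_bot hne
  have horth : ∀ v ∈ s, ⟪w, v⟫ = 0 := by
    intro v hv
    have := (Submodule.mem_orthogonal K w).mp hwK v (Submodule.subset_span hv)
    rwa [real_inner_comm] at this
  refine ⟨w, hw0, ?_, ?_, ?_, ?_, ?_, ?_⟩ <;>
    exact horth _ (by simp [hs])

/-- Under the differentiated second Bianchi hypothesis, `Φ'_a a = 0`,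
`Φ'_a (Φ a) = 0`, and `Φ'_a b + Φ'_b a = 0`. -/
theorem stmt_13 {V : Type*} [NormedAddCommGroup V] [InnerProductSpace ℝ V]
    [FiniteDimensional ℝ V]
    (m : ℕ) (hm : Module.finrank ℝ V = m) (hm8 : 8 ≤ m)
    (Φ : V →ₗ[ℝ] V)
    (hskew : ∀ u v : V, ⟪Φ u, v⟫ = -⟪u, Φ v⟫)
    (hsq : ∀ v : V, Φ (Φ v) = -v)
    (l₁ : ℝ) (hl₁ : l₁ ≠ 0)
    (τ' : V →ₗ[ℝ] ℝ) (ρ' Φ' : V →ₗ[ℝ] V →ₗ[ℝ] V)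
    (hΦ'skew : ∀ x u v : V, ⟪Φ' x u, v⟫ = -⟪u, Φ' x v⟫)
    (hΦ'anti : ∀ x v : V, Φ' x (Φ v) = -Φ (Φ' x v))
    (hρ'sym : ∀ x u v : V, ⟪ρ' x u, v⟫ = ⟪u, ρ' x v⟫)
    (hB : ∀ x y z w : V,
      bianchiTerm (-1 / (((m : ℝ) - 1) * ((m : ℝ) - 2))) (1 / ((m : ℝ) - 2)) l₁ τ' ρ' Φ' Φ x y z w +
        bianchiTerm (-1 / (((m : ℝ) - 1) * ((m : ℝ) - 2))) (1 / ((m : ℝ) - 2)) l₁ τ' ρ' Φ' Φ y z x w +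
        bianchiTerm (-1 / (((m : ℝ) - 1) * ((m : ℝ) - 2))) (1 / ((m : ℝ) - 2)) l₁ τ' ρ' Φ' Φ z x y w = 0) :
    (∀ a : V, Φ' a a = 0 ∧ Φ' a (Φ a) = 0) ∧
    (∀ a b : V, Φ' a b + Φ' b a = 0) := by
  -- basic facts
  have hJJ : ∀ u v : V, ⟪Φ u, Φ v⟫ = ⟪u, v⟫ := by
    intro u v
    rw [hskew, hsq, inner_neg_right, neg_neg]
  have hΦw0 : ∀ x w : V, ⟪Φ' x w, Φ w⟫ = 0 := by
    intro x w
    have h1 : ⟪Φ' x w, Φ w⟫ = -⟪w, Φ' x (Φ w)⟫ := hΦ'skew x w (Φ w)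
    rw [hΦ'anti, inner_neg_right, neg_neg] at h1
    have h2 : ⟪w, Φ (Φ' x w)⟫ = -⟪Φ w, Φ' x w⟫ := by
      rw [hskew]; ring_nf
    rw [h2, real_inner_comm (Φ w)] at h1
    rw [real_inner_comm]
    linarith
  -- Step A
  have hA : ∀ x y z : V, ⟪Φ' x y, z⟫ + ⟪Φ' y z, x⟫ + ⟪Φ' z x, y⟫ = 0 := by
    intro x y z
    obtain ⟨w, hw0, o1, o2, o3, o4, o5, o6⟩ :=
      exists_orth6 (by rw [hm]; omega) x y z (Φ x) (Φ y) (Φ z)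
    have pxw : ⟪x, w⟫ = 0 := by rw [real_inner_comm]; exact o1
    have pyw : ⟪y, w⟫ = 0 := by rw [real_inner_comm]; exact o2
    have pzw : ⟪z, w⟫ = 0 := by rw [real_inner_comm]; exact o3
    have pΦxw : ⟪Φ x, w⟫ = 0 := by rw [real_inner_comm]; exact o4
    have pΦyw : ⟪Φ y, w⟫ = 0 := by rw [real_inner_comm]; exact o5
    have pΦzw : ⟪Φ z, w⟫ = 0 := by rw [real_inner_comm]; exact o6
    have pxΦw : ⟪x, Φ w⟫ = 0 := by have := hskew x w; linarith [pΦxw]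
    have pyΦw : ⟪y, Φ w⟫ = 0 := by have := hskew y w; linarith [pΦyw]
    have pzΦw : ⟪z, Φ w⟫ = 0 := by have := hskew z w; linarith [pΦzw]
    have h := congrArg (fun v : V => (inner ℝ v (Φ w) : ℝ)) (hB x y z w)
    simp only [bianchiTerm, inner_add_left, inner_sub_left, real_inner_smul_left,
      inner_zero_left, hsq, inner_neg_left, inner_neg_right, hJJ, hΦw0,
      pxw, pyw, pzw, pΦxw, pΦyw, pΦzw, pxΦw, pyΦw, pzΦw,
      mul_zero, zero_mul, add_zero, zero_add, neg_zero, sub_zero, zero_sub, neg_neg] at h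
    have hww : (⟪w, w⟫ : ℝ) ≠ 0 := fun hc => hw0 (inner_self_eq_zero.mp hc)
    have h2 : (-2 * l₁ * ⟪w, w⟫) * (⟪Φ' x y, z⟫ + ⟪Φ' y z, x⟫ + ⟪Φ' z x, y⟫)
        = (-2 * l₁ * ⟪w, w⟫) * 0 := by
      rw [mul_zero]; linear_combination h
    exact mul_left_cancel₀ (by simp [hl₁, hww, hw0]) h2
  have hC : ∀ z w u : V, ⟪w, z⟫ = 0 → ⟪w, Φ z⟫ = 0 → ⟪u, z⟫ = 0 → ⟪u, Φ z⟫ = 0 →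
      ⟪Φ' z w, u⟫ = 0 := by
    intro z w u hwz hwΦz huz huΦz
    obtain ⟨x, hx0, q1, q2, q3, q4, q5, q6⟩ :=
      exists_orth6 (by rw [hm]; omega) z w u (Φ z) (Φ w) (Φ u)
    have pzw : ⟪z, w⟫ = 0 := by rw [real_inner_comm]; exact hwz
    have pzu : ⟪z, u⟫ = 0 := by rw [real_inner_comm]; exact huz
    have pxz : ⟪x, z⟫ = 0 := q1
    have pxw : ⟪x, w⟫ = 0 := q2
    have pxu : ⟪x, u⟫ = 0 := q3
    have pΦzw : ⟪Φ z, w⟫ = 0 := by have := hskew z w; linarith [hwΦz, real_inner_comm w (Φ z) ▸ hwΦz]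
    have pΦzu : ⟪Φ z, u⟫ = 0 := by have := hskew z u; linarith [real_inner_comm u (Φ z) ▸ huΦz]
    have pΦzx : ⟪Φ z, x⟫ = 0 := by rw [real_inner_comm]; exact q4
    have pΦxu : ⟪Φ x, u⟫ = 0 := by have := hskew x u; linarith [real_inner_comm x (Φ u) ▸ q6]
    have pΦxw : ⟪Φ x, w⟫ = 0 := by have := hskew x w; linarith [real_inner_comm x (Φ w) ▸ q5]
    have h := congrArg (fun v : V => (inner ℝ v u : ℝ)) (hB x (Φ x) z w)
    simp only [bianchiTerm, inner_add_left, inner_sub_left, real_inner_smul_left,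
      inner_zero_left, hsq, inner_neg_left, inner_neg_right, hJJ, hΦw0,
      pzw, pzu, pxz, pxw, pxu, pΦzw, pΦzu, pΦzx, pΦxu, pΦxw,
      mul_zero, zero_mul, add_zero, zero_add, neg_zero, sub_zero, zero_sub, neg_neg] at h
    have hxx : (⟪x, x⟫ : ℝ) ≠ 0 := fun hc => hx0 (inner_self_eq_zero.mp hc)
    have hAx := hA x (Φ x) z
    have h2 : (-2 * l₁ * ⟪x, x⟫) * ⟪Φ' z w, u⟫ = (-2 * l₁ * ⟪x, x⟫) * 0 := by
      rw [mul_zero]; linear_combination h + (2 * l₁ * ⟪Φ w, u⟫) * hAx - (2 * l₁ * ⟪Φ w, u⟫) * hΦw0 z x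
    exact mul_left_cancel₀ (by simp [hl₁, hxx, hx0]) h2
  have hself : ∀ a b : V, ⟪Φ' a b, b⟫ = 0 := by
    intro a b
    have h1 := hΦ'skew a b b
    have h2 := real_inner_comm b (Φ' a b)
    linarith
  -- (E') : projection formula
  have hE : ∀ z w u : V, ⟪w, z⟫ = 0 → ⟪w, Φ z⟫ = 0 →
      ⟪z, z⟫ * ⟪Φ' z w, u⟫ = ⟪u, z⟫ * ⟪Φ' z w, z⟫ + ⟪u, Φ z⟫ * ⟪Φ' z w, Φ z⟫ := by
    intro z w u hwz hwΦz
    have pJz : ⟪Φ z, z⟫ = 0 := by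
      have h1 := hskew z z
      have h2 := real_inner_comm z (Φ z)
      linarith
    set u₀ : V := ⟪z, z⟫ • u - ⟪u, z⟫ • z - ⟪u, Φ z⟫ • Φ z with hu₀
    have hu₀z : ⟪u₀, z⟫ = 0 := by
      simp only [hu₀, inner_sub_left, real_inner_smul_left, pJz]
      ring
    have hu₀Φz : ⟪u₀, Φ z⟫ = 0 := by
      simp only [hu₀, inner_sub_left, real_inner_smul_left, hJJ]
      have : ⟪z, Φ z⟫ = 0 := by rw [real_inner_comm]; exact pJz
      rw [this]; ring
    have h0 := hC z w u₀ hwz hwΦz hu₀z hu₀Φz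
    simp only [hu₀, inner_sub_right, real_inner_smul_right] at h0
    linarith
  -- (F) : Φ' (Φ x) (Φ x) = - Φ' x x
  have hF : ∀ x : V, Φ' (Φ x) (Φ x) = - Φ' x x := by
    intro x
    set q : V := Φ (Φ' x x) + Φ (Φ' (Φ x) (Φ x)) with hq
    have key : ∀ w : V, ⟪w, x⟫ = 0 → ⟪w, Φ x⟫ = 0 → ⟪w, q⟫ = 0 := by
      intro w hwx hwΦx
      have h1 := hA (Φ x) x w
      -- ⟪Φ' x w, Φ x⟫ = ⟪w, Φ (Φ' x x)⟫
      have h2 : ⟪Φ' x w, Φ x⟫ = ⟪w, Φ (Φ' x x)⟫ := by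
        rw [hΦ'skew, hΦ'anti, inner_neg_right, neg_neg]
      -- ⟪Φ' w (Φ x), x⟫ = 0 by hC
      have h3 : ⟪Φ' w (Φ x), x⟫ = 0 := by
        apply hC w (Φ x) x
        · rw [real_inner_comm]; exact hwΦx
        · rw [hJJ, real_inner_comm]; exact hwx
        · rw [real_inner_comm]; exact hwx
        · have := hskew x w
          have hc := real_inner_comm w (Φ x)
          linarith
      -- Φ' (Φ x) x = Φ (Φ' (Φ x) (Φ x))
      have h4 : Φ' (Φ x) x = Φ (Φ' (Φ x) (Φ x)) := by
        have hx : x = - Φ (Φ x) := by rw [hsq, neg_neg]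
        calc Φ' (Φ x) x = Φ' (Φ x) (-Φ (Φ x)) := by rw [← hx]
          _ = - Φ' (Φ x) (Φ (Φ x)) := by rw [map_neg]
          _ = Φ (Φ' (Φ x) (Φ x)) := by rw [hΦ'anti, neg_neg]
      have h5 : ⟪Φ' (Φ x) x, w⟫ = ⟪w, Φ (Φ' (Φ x) (Φ x))⟫ := by
        rw [h4, real_inner_comm]
      rw [hq, inner_add_right]
      linarith [h1, h2, h3, h5]
    have hqx : ⟪q, x⟫ = 0 := by
      rw [hq, inner_add_left]
      have a1 : ⟪Φ (Φ' x x), x⟫ = 0 := by rw [hskew, hΦw0, neg_zero]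
      have a2 : ⟪Φ (Φ' (Φ x) (Φ x)), x⟫ = 0 := by rw [hskew, hself, neg_zero]
      rw [a1, a2]; ring
    have hqΦx : ⟪q, Φ x⟫ = 0 := by
      rw [hq, inner_add_left]
      have a1 : ⟪Φ (Φ' x x), Φ x⟫ = 0 := by rw [hJJ]; exact hself x x
      have a2 : ⟪Φ (Φ' (Φ x) (Φ x)), Φ x⟫ = 0 := by
        rw [hJJ]
        have h8 := hΦw0 (Φ x) (Φ x)
        rwa [hsq, inner_neg_right, neg_eq_zero] at h8
      rw [a1, a2]; ring
    have hq0 : q = 0 := by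
      have := key q hqx hqΦx
      rw [real_inner_comm] at this
      exact inner_self_eq_zero.mp this
    have hS : Φ' x x + Φ' (Φ x) (Φ x) = 0 := by
      have h6 : Φ (Φ' x x + Φ' (Φ x) (Φ x)) = q := by rw [hq, map_add]
      have h7 : Φ (Φ (Φ' x x + Φ' (Φ x) (Φ x))) = Φ q := by rw [h6]
      rw [hsq, hq0, map_zero] at h7
      have := neg_eq_zero.mp (h7)
      exact this
    exact eq_neg_of_add_eq_zero_right hS
  have pJv : ∀ v : V, ⟪Φ v, v⟫ = 0 := by
    intro v
    have h1 := hskew v v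
    have h2 := real_inner_comm v (Φ v)
    linarith
  have pvJ : ∀ v : V, ⟪v, Φ v⟫ = 0 := by
    intro v
    have := pJv v
    rwa [real_inner_comm] at this
  -- (G)
  have hG : ∀ x x' w : V, ⟪x', x⟫ = 0 → ⟪x', Φ x⟫ = 0 → ⟪w, x⟫ = 0 → ⟪w, Φ x⟫ = 0 →
      ⟪w, x'⟫ = 0 → ⟪w, Φ x'⟫ = 0 →
      ⟪x', x'⟫ * ⟪w, Φ' x x⟫ = ⟪x, x⟫ * ⟪w, Φ' x' x'⟫ := by
    intro x x' w o1 o2 o3 o4 o5 o6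
    have pxx' : ⟪x, x'⟫ = 0 := by rw [real_inner_comm]; exact o1
    have pΦxx' : ⟪Φ x, x'⟫ = 0 := by rw [real_inner_comm]; exact o2
    have pxΦx' : ⟪x, Φ x'⟫ = 0 := by have := hskew x x'; linarith
    have hwz : ⟪w, x + x'⟫ = 0 := by rw [inner_add_right, o3, o5, add_zero]
    have hwΦz : ⟪w, Φ (x + x')⟫ = 0 := by
      rw [map_add, inner_add_right, o4, o6, add_zero]
    have he := hE (x + x') w x hwz hwΦz
    have hadd : Φ' (x + x') w = Φ' x w + Φ' x' w := by
      simp only [map_add, LinearMap.add_apply]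
    have e1 : ⟪x + x', x + x'⟫ = ⟪x, x⟫ + ⟪x', x'⟫ := by
      rw [inner_add_left, inner_add_right, inner_add_right, pxx', o1]; ring
    have e2 : ⟪x, x + x'⟫ = ⟪x, x⟫ := by rw [inner_add_right, pxx', add_zero]
    have e3 : ⟪x, Φ (x + x')⟫ = 0 := by
      rw [map_add, inner_add_right, pvJ, pxΦx', add_zero]
    have c1 : ⟪Φ' x' w, x⟫ = 0 := hC x' w x o5 o6 pxx' pxΦx'
    have e4 : ⟪Φ' (x + x') w, x⟫ = -⟪w, Φ' x x⟫ := by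
      rw [hadd, inner_add_left, c1, add_zero, hΦ'skew]
    have c2 : ⟪w, Φ' x x'⟫ = 0 := by
      rw [real_inner_comm]; exact hC x x' w o1 o2 o3 o4
    have c3 : ⟪w, Φ' x' x⟫ = 0 := by
      rw [real_inner_comm]; exact hC x' x w pxx' pxΦx' o5 o6
    have e5 : ⟪Φ' (x + x') w, x + x'⟫ = -(⟪w, Φ' x x⟫ + ⟪w, Φ' x' x'⟫) := by
      rw [hΦ'skew]
      have : Φ' (x + x') (x + x') = Φ' x x + Φ' x x' + Φ' x' x + Φ' x' x' := by
        simp only [map_add, LinearMap.add_apply]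
        abel
      rw [this, inner_add_right, inner_add_right, inner_add_right, c2, c3]
      ring
    rw [e1, e2, e3, e4, e5] at he
    linear_combination -he
  -- Φ' x x = 0
  have hv0 : ∀ x : V, Φ' x x = 0 := by
    intro x
    rcases eq_or_ne x 0 with h | h
    · simp [h]
    obtain ⟨x', hx'0, o1, o2, o3, o4, -, -⟩ :=
      exists_orth6 (by rw [hm]; omega) x (Φ x) (Φ' x x) (Φ (Φ' x x)) 0 0
    have pvx : ⟪Φ' x x, x⟫ = 0 := hself x x
    have pvΦx : ⟪Φ' x x, Φ x⟫ = 0 := hΦw0 x x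
    have pvx' : ⟪Φ' x x, x'⟫ = 0 := by rw [real_inner_comm]; exact o3
    have pvΦx' : ⟪Φ' x x, Φ x'⟫ = 0 := by
      have h1 := hskew (Φ' x x) x'
      have h2 : ⟪Φ (Φ' x x), x'⟫ = 0 := by rw [real_inner_comm]; exact o4
      linarith
    have g1 := hG x x' (Φ' x x) o1 o2 pvx pvΦx pvx' pvΦx'
    have q1 : ⟪Φ x', x⟫ = 0 := by have := hskew x' x; linarith
    have q2 : ⟪Φ x', Φ x⟫ = 0 := by rw [hJJ]; exact o1
    have q3 : ⟪Φ' x x, Φ (Φ x')⟫ = 0 := by rw [hsq, inner_neg_right, pvx', neg_zero]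
    have g2 := hG x (Φ x') (Φ' x x) q1 q2 pvx pvΦx pvΦx' q3
    rw [hJJ, hF, inner_neg_right] at g2
    have hx'x' : (⟪x', x'⟫ : ℝ) ≠ 0 := fun hc => hx'0 (inner_self_eq_zero.mp hc)
    have h0 : ⟪x', x'⟫ * ⟪Φ' x x, Φ' x x⟫ = 0 := by linarith
    rcases mul_eq_zero.mp h0 with h1 | h1
    · exact absurd h1 hx'x'
    · exact inner_self_eq_zero.mp h1
  -- Φ' = 0
  have hΦ'0 : ∀ x b : V, Φ' x b = 0 := by
    intro x b
    rcases eq_or_ne x 0 with h | h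
    · simp [h]
    have hxx : (⟪x, x⟫ : ℝ) ≠ 0 := fun hc => h (inner_self_eq_zero.mp hc)
    have hw : ∀ w : V, ⟪w, x⟫ = 0 → ⟪w, Φ x⟫ = 0 → Φ' x w = 0 := by
      intro w h1 h2
      have z1 : ⟪Φ' x w, x⟫ = 0 := by rw [hΦ'skew, hv0, inner_zero_right, neg_zero]
      have z2 : ⟪Φ' x w, Φ x⟫ = 0 := by
        rw [hΦ'skew, hΦ'anti, hv0, map_zero, neg_zero, inner_zero_right, neg_zero]
      have he := hE x w (Φ' x w) h1 h2
      rw [z1, z2, mul_zero, add_zero] at he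
      rcases mul_eq_zero.mp he with h3 | h3
      · exact absurd h3 hxx
      · exact inner_self_eq_zero.mp h3
    set b₀ : V := ⟪x, x⟫ • b - ⟪b, x⟫ • x - ⟪b, Φ x⟫ • Φ x with hb₀
    have hb₀x : ⟪b₀, x⟫ = 0 := by
      simp only [hb₀, inner_sub_left, real_inner_smul_left, pJv]
      ring
    have hb₀Φx : ⟪b₀, Φ x⟫ = 0 := by
      simp only [hb₀, inner_sub_left, real_inner_smul_left, hJJ, pvJ]
      ring
    have h3 := hw b₀ hb₀x hb₀Φx
    rw [hb₀, map_sub, map_sub, map_smul, map_smul, map_smul, hv0, hΦ'anti, hv0,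
      map_zero, neg_zero, smul_zero, smul_zero, sub_zero, sub_zero] at h3
    rcases smul_eq_zero.mp h3 with h4 | h4
    · exact absurd h4 hxx
    · exact h4
  exact ⟨fun a => ⟨hΦ'0 a a, hΦ'0 a (Φ a)⟩,
    fun a b => by rw [hΦ'0 a b, hΦ'0 b a, add_zero]⟩
end

section
/- Under the differentiated second Bianchi hypothesis stated in the context, one has Φ'_x = 0 for every x ∈ V; that is, the family Φ' vanishes identically. -/
open RealInnerProductSpace

/-- In a real inner product space of rank `> 6` there is a nonzero vector orthogonal to any
six given vectors. -/
lemma exists_perp6 {V : Type*} [NormedAddCommGroup V] [InnerProductSpace ℝ V]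
    [FiniteDimensional ℝ V] (hdim : 6 < Module.finrank ℝ V) (a b c d e f : V) :
    ∃ y : V, y ≠ 0 ∧ ⟪y, a⟫ = 0 ∧ ⟪y, b⟫ = 0 ∧ ⟪y, c⟫ = 0 ∧ ⟪y, d⟫ = 0 ∧ ⟪y, e⟫ = 0 ∧
      ⟪y, f⟫ = 0 := by
  classical
  set s : Finset V := insert a (insert b (insert c (insert d (insert e {f})))) with hs
  set K : Submodule ℝ V := Submodule.span ℝ (s : Set V) with hK
  have hcard : s.card ≤ 6 := by
    refine (Finset.card_insert_le _ _).trans (Nat.succ_le_succ ?_)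
    refine (Finset.card_insert_le _ _).trans (Nat.succ_le_succ ?_)
    refine (Finset.card_insert_le _ _).trans (Nat.succ_le_succ ?_)
    refine (Finset.card_insert_le _ _).trans (Nat.succ_le_succ ?_)
    refine (Finset.card_insert_le _ _).trans (Nat.succ_le_succ ?_)
    simp
  have hrk : Module.finrank ℝ K ≤ 6 := le_trans (finrank_span_finset_le_card s) hcard
  have hbot : Kᗮ ≠ ⊥ := by
    intro hb
    have hsum := Submodule.finrank_add_finrank_orthogonal K
    rw [hb, finrank_bot] at hsum
    omega
  obtain ⟨y, hyK, hy0⟩ := (Submodule.ne_bot_iff _).mp hbot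
  have hmem : ∀ v ∈ K, ⟪v, y⟫ = 0 := (Submodule.mem_orthogonal K y).mp hyK
  have key : ∀ v ∈ (s : Set V), ⟪y, v⟫ = 0 := fun v hv => by
    rw [real_inner_comm]; exact hmem v (Submodule.subset_span hv)
  exact ⟨y, hy0, key a (by simp [hs]), key b (by simp [hs]), key c (by simp [hs]),
    key d (by simp [hs]), key e (by simp [hs]), key f (by simp [hs])⟩

/-- Under the differentiated second Bianchi hypothesis, the family `Φ'` vanishes
identically. -/
theorem stmt_14 {V : Type*} [NormedAddCommGroup V] [InnerProductSpace ℝ V]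
    [FiniteDimensional ℝ V]
    (m : ℕ) (hm : Module.finrank ℝ V = m) (hm8 : 8 ≤ m)
    (Φ : V →ₗ[ℝ] V)
    (hskew : ∀ u v : V, ⟪Φ u, v⟫ = -⟪u, Φ v⟫)
    (hsq : ∀ v : V, Φ (Φ v) = -v)
    (l₁ : ℝ) (hl₁ : l₁ ≠ 0)
    (τ' : V →ₗ[ℝ] ℝ) (ρ' Φ' : V →ₗ[ℝ] V →ₗ[ℝ] V)
    (hΦ'skew : ∀ x u v : V, ⟪Φ' x u, v⟫ = -⟪u, Φ' x v⟫)
    (hΦ'anti : ∀ x v : V, Φ' x (Φ v) = -Φ (Φ' x v))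
    (hρ'sym : ∀ x u v : V, ⟪ρ' x u, v⟫ = ⟪u, ρ' x v⟫)
    (hB : ∀ x y z w : V,
      bianchiTerm (-1 / (((m : ℝ) - 1) * ((m : ℝ) - 2))) (1 / ((m : ℝ) - 2)) l₁ τ' ρ' Φ' Φ x y z w +
        bianchiTerm (-1 / (((m : ℝ) - 1) * ((m : ℝ) - 2))) (1 / ((m : ℝ) - 2)) l₁ τ' ρ' Φ' Φ y z x w +
        bianchiTerm (-1 / (((m : ℝ) - 1) * ((m : ℝ) - 2))) (1 / ((m : ℝ) - 2)) l₁ τ' ρ' Φ' Φ z x y w = 0) :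
    ∀ x : V, Φ' x = 0 := by
  have hdim : 6 < Module.finrank ℝ V := by rw [hm]; omega
  -- basic scalar facts
  have hPP : ∀ a b : V, ⟪Φ a, Φ b⟫ = ⟪a, b⟫ := by
    intro a b; rw [hskew, hsq, inner_neg_right, neg_neg]
  have hPd2 : ∀ a : V, ⟪a, Φ a⟫ = 0 := by
    intro a; have h := hskew a a; have h2 := real_inner_comm a (Φ a); linarith
  have hPd1 : ∀ a : V, ⟪Φ a, a⟫ = 0 := by
    intro a; rw [real_inner_comm]; exact hPd2 a
  have hFd : ∀ a b : V, ⟪Φ' a b, b⟫ = 0 := by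
    intro a b; have h := hΦ'skew a b b; have h2 := real_inner_comm b (Φ' a b); linarith
  have hL0 : ∀ a b : V, ⟪Φ' a b, Φ b⟫ = 0 := by
    intro a b
    have h1 := hΦ'skew a b (Φ b)
    rw [hΦ'anti, inner_neg_right, neg_neg] at h1
    have h2 : ⟪b, Φ (Φ' a b)⟫ = -⟪Φ' a b, Φ b⟫ := by
      rw [real_inner_comm, hskew]
    linarith
  have hL0' : ∀ a b : V, ⟪Φ' a (Φ b), b⟫ = 0 := by
    intro a b
    have h1 := hΦ'skew a (Φ b) b
    have h2 := real_inner_comm (Φ b) (Φ' a b)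
    have h3 := hL0 a b
    linarith
  -- scalar expansion of the Bianchi summand
  have hBT : ∀ x y z w u : V,
      ⟪bianchiTerm (-1 / (((m : ℝ) - 1) * ((m : ℝ) - 2))) (1 / ((m : ℝ) - 2)) l₁ τ' ρ' Φ' Φ
          x y z w, u⟫ =
        (-1 / (((m : ℝ) - 1) * ((m : ℝ) - 2))) * τ' x * (⟪z, w⟫ * ⟪y, u⟫ - ⟪y, w⟫ * ⟪z, u⟫) +
        (1 / ((m : ℝ) - 2)) * (⟪ρ' x z, w⟫ * ⟪y, u⟫ - ⟪ρ' x y, w⟫ * ⟪z, u⟫ +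
          ⟪z, w⟫ * ⟪ρ' x y, u⟫ - ⟪y, w⟫ * ⟪ρ' x z, u⟫) +
        l₁ * (⟪Φ' x z, w⟫ * ⟪Φ y, u⟫ + ⟪Φ z, w⟫ * ⟪Φ' x y, u⟫ - ⟪Φ' x y, w⟫ * ⟪Φ z, u⟫ -
          ⟪Φ y, w⟫ * ⟪Φ' x z, u⟫ - 2 * ⟪Φ' x y, z⟫ * ⟪Φ w, u⟫ - 2 * ⟪Φ y, z⟫ * ⟪Φ' x w, u⟫) := by
    intro x y z w u
    simp only [bianchiTerm, inner_add_left, inner_sub_left, real_inner_smul_left]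
  have hSc : ∀ x y z w u : V,
      ⟪bianchiTerm (-1 / (((m : ℝ) - 1) * ((m : ℝ) - 2))) (1 / ((m : ℝ) - 2)) l₁ τ' ρ' Φ' Φ
          x y z w, u⟫ +
      ⟪bianchiTerm (-1 / (((m : ℝ) - 1) * ((m : ℝ) - 2))) (1 / ((m : ℝ) - 2)) l₁ τ' ρ' Φ' Φ
          y z x w, u⟫ +
      ⟪bianchiTerm (-1 / (((m : ℝ) - 1) * ((m : ℝ) - 2))) (1 / ((m : ℝ) - 2)) l₁ τ' ρ' Φ' Φ
          z x y w, u⟫ = 0 := by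
    intro x y z w u
    rw [← inner_add_left, ← inner_add_left, hB x y z w, inner_zero_left]
  -- Lemma C : first Bianchi configuration
  have lemC : ∀ x z : V, ⟪z, x⟫ = 0 → ⟪z, Φ x⟫ = 0 →
      ⟪Φ' x (Φ x), z⟫ - ⟪Φ' (Φ x) x, z⟫ = 0 := by
    intro x z hzx hzPx
    obtain ⟨w, hw0, hwx, hwPx, hwz, hwPz, -, -⟩ := exists_perp6 hdim x (Φ x) z (Φ z) 0 0
    have hxz : ⟪x, z⟫ = 0 := by rw [real_inner_comm]; exact hzx
    have hxPz : ⟪x, Φ z⟫ = 0 := by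
      rw [real_inner_comm, hskew, hzPx, neg_zero]
    have hxw : ⟪x, w⟫ = 0 := by rw [real_inner_comm]; exact hwx
    have hxPw : ⟪x, Φ w⟫ = 0 := by
      rw [real_inner_comm, hskew, hwPx, neg_zero]
    have hzw : ⟪z, w⟫ = 0 := by rw [real_inner_comm]; exact hwz
    have hzPw : ⟪z, Φ w⟫ = 0 := by
      rw [real_inner_comm, hskew, hwPz, neg_zero]
    have h := hSc x (Φ x) z w (Φ w)
    rw [hBT, hBT, hBT] at h
    simp only [hskew, hsq, map_neg, LinearMap.neg_apply, inner_neg_left, inner_neg_right,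
      neg_neg, hPd2, hFd, hL0, hL0', hzx, hzPx, hxz, hxPz, hwx, hwPx, hxw, hxPw, hwz, hwPz,
      hzw, hzPw, mul_zero, zero_mul, mul_neg, neg_zero, add_zero, zero_add, sub_zero,
      zero_sub] at h
    have hww : ⟪w, w⟫ ≠ 0 := fun hww0 => hw0 (inner_self_eq_zero.mp hww0)
    have key : l₁ * (2 * ⟪w, w⟫) * (⟪Φ' x (Φ x), z⟫ - ⟪Φ' (Φ x) x, z⟫) = 0 := by
      have hsw : ⟪Φ' (Φ x) z, x⟫ = -⟪Φ' (Φ x) x, z⟫ := by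
        rw [hΦ'skew, real_inner_comm]
      linear_combination (-1 : ℝ) * h - 2 * l₁ * ⟪w, w⟫ * hsw
    have hne : l₁ * (2 * ⟪w, w⟫) ≠ 0 := mul_ne_zero hl₁ (mul_ne_zero two_ne_zero hww)
    exact (mul_eq_zero.mp key).resolve_left hne
  -- Lemma C₂ : Φ' (Φ x) x = Φ' x (Φ x)
  have lemC2 : ∀ x : V, Φ' (Φ x) x = Φ' x (Φ x) := by
    intro x
    have hAx : ⟪Φ' x (Φ x) - Φ' (Φ x) x, x⟫ = 0 := by
      rw [inner_sub_left, hL0' x x, hFd (Φ x) x, sub_zero]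
    have hAPx : ⟪Φ' x (Φ x) - Φ' (Φ x) x, Φ x⟫ = 0 := by
      rw [inner_sub_left, hFd x (Φ x), hL0 (Φ x) x, sub_zero]
    have hAself : ⟪Φ' x (Φ x) - Φ' (Φ x) x, Φ' x (Φ x) - Φ' (Φ x) x⟫ = 0 := by
      rw [inner_sub_left]
      exact lemC x (Φ' x (Φ x) - Φ' (Φ x) x) hAx hAPx
    have h0 : Φ' x (Φ x) - Φ' (Φ x) x = 0 := inner_self_eq_zero.mp hAself
    rw [sub_eq_zero] at h0
    exact h0.symm
  -- Lemma R : second Bianchi configuration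
  have lemR : ∀ x u : V, ⟪u, x⟫ = 0 → ⟪u, Φ x⟫ = 0 → ⟪Φ' x (Φ x), u⟫ = 0 := by
    intro x u hux huPx
    obtain ⟨y, hy0, hyx, hyPx, hyu, hyPu, -, -⟩ := exists_perp6 hdim x (Φ x) u (Φ u) 0 0
    have hxy : ⟪x, y⟫ = 0 := by rw [real_inner_comm]; exact hyx
    have hxPy : ⟪x, Φ y⟫ = 0 := by rw [real_inner_comm, hskew, hyPx, neg_zero]
    have hxu : ⟪x, u⟫ = 0 := by rw [real_inner_comm]; exact hux
    have hxPu : ⟪x, Φ u⟫ = 0 := by rw [real_inner_comm, hskew, huPx, neg_zero]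
    have huy : ⟪u, y⟫ = 0 := by rw [real_inner_comm]; exact hyu
    have huPy : ⟪u, Φ y⟫ = 0 := by rw [real_inner_comm, hskew, hyPu, neg_zero]
    have h := hSc x y (Φ y) (Φ x) u
    rw [hBT, hBT, hBT] at h
    rw [lemC2 y] at h
    simp only [hskew, hsq, map_neg, LinearMap.neg_apply, inner_neg_left, inner_neg_right,
      neg_neg, hPd2, hFd, hL0, hL0', hyx, hyPx, hyu, hyPu, hxy, hxPy, hxu, hxPu, huy, huPy,
      hux, huPx, mul_zero, zero_mul, mul_neg, neg_zero, add_zero, zero_add, sub_zero,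
      zero_sub, sub_self] at h
    have hyy : ⟪y, y⟫ ≠ 0 := fun hyy0 => hy0 (inner_self_eq_zero.mp hyy0)
    have key : l₁ * (2 * ⟪y, y⟫) * ⟪Φ' x (Φ x), u⟫ = 0 := by
      linear_combination (-1 : ℝ) * h
    have hne : l₁ * (2 * ⟪y, y⟫) ≠ 0 := mul_ne_zero hl₁ (mul_ne_zero two_ne_zero hyy)
    exact (mul_eq_zero.mp key).resolve_left hne
  -- v_x = 0
  have lemV : ∀ x : V, Φ' x x = 0 := by
    intro x
    have hvs : ∀ s : V, ⟪s, x⟫ = 0 → ⟪s, Φ x⟫ = 0 → ⟪Φ' x x, s⟫ = 0 := by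
      intro s hsx hsPx
      have h1 : ⟪Φ s, x⟫ = 0 := by rw [hskew, hsPx, neg_zero]
      have h2 : ⟪Φ s, Φ x⟫ = 0 := by rw [hPP]; exact hsx
      have h3 := lemR x (Φ s) h1 h2
      rw [hΦ'anti, inner_neg_left, neg_eq_zero] at h3
      rw [← hPP (Φ' x x) s]
      rw [real_inner_comm] at h3 ⊢
      exact h3
    have hself : ⟪Φ' x x, Φ' x x⟫ = 0 := hvs (Φ' x x) (hFd x x) (hL0 x x)
    exact inner_self_eq_zero.mp (by rw [real_inner_comm] at hself ⊢; exact hself)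
  -- Lemma A : third Bianchi configuration
  have lemA : ∀ x y w u : V, y ≠ 0 →
      ⟪y, x⟫ = 0 → ⟪y, Φ x⟫ = 0 → ⟪w, x⟫ = 0 → ⟪w, Φ x⟫ = 0 → ⟪w, y⟫ = 0 → ⟪w, Φ y⟫ = 0 →
      ⟪u, x⟫ = 0 → ⟪u, Φ x⟫ = 0 → ⟪u, y⟫ = 0 → ⟪u, Φ y⟫ = 0 → ⟪u, Φ w⟫ = 0 →
      ⟪Φ' x w, u⟫ = 0 := by
    intro x y w u hy0 hyx hyPx hwx hwPx hwy hwPy hux huPx huy huPy huPw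
    have hxy : ⟪x, y⟫ = 0 := by rw [real_inner_comm]; exact hyx
    have hxPy : ⟪x, Φ y⟫ = 0 := by rw [real_inner_comm, hskew, hyPx, neg_zero]
    have hxw : ⟪x, w⟫ = 0 := by rw [real_inner_comm]; exact hwx
    have hxPw : ⟪x, Φ w⟫ = 0 := by rw [real_inner_comm, hskew, hwPx, neg_zero]
    have hyw : ⟪y, w⟫ = 0 := by rw [real_inner_comm]; exact hwy
    have hyPw : ⟪y, Φ w⟫ = 0 := by rw [real_inner_comm, hskew, hwPy, neg_zero]
    have hwPu : ⟪w, Φ u⟫ = 0 := by rw [real_inner_comm, hskew, huPw, neg_zero]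
    have hyu' : ⟪y, u⟫ = 0 := by rw [real_inner_comm]; exact huy
    have hyPu' : ⟪y, Φ u⟫ = 0 := by rw [real_inner_comm, hskew, huPy, neg_zero]
    have hxu' : ⟪x, u⟫ = 0 := by rw [real_inner_comm]; exact hux
    have hxPu' : ⟪x, Φ u⟫ = 0 := by rw [real_inner_comm, hskew, huPx, neg_zero]
    have h := hSc x y (Φ y) w u
    rw [hBT, hBT, hBT] at h
    simp only [hskew, hsq, map_neg, LinearMap.neg_apply, inner_neg_left, inner_neg_right,
      neg_neg, hPd2, hFd, hL0, hL0', hyx, hyPx, hxy, hxPy, hwx, hwPx, hxw, hxPw, hwy, hwPy,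
      hyw, hyPw, hux, huPx, huy, huPy, huPw, hwPu, hyu', hyPu', hxu', hxPu', mul_zero,
      zero_mul, mul_neg, neg_zero, add_zero, zero_add, sub_zero, zero_sub, sub_self] at h
    have hyy : ⟪y, y⟫ ≠ 0 := fun hyy0 => hy0 (inner_self_eq_zero.mp hyy0)
    have key : l₁ * (2 * ⟪y, y⟫) * ⟪Φ' x w, u⟫ = 0 := by
      linear_combination (-1 : ℝ) * h
    have hne : l₁ * (2 * ⟪y, y⟫) ≠ 0 := mul_ne_zero hl₁ (mul_ne_zero two_ne_zero hyy)
    exact (mul_eq_zero.mp key).resolve_left hne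
  -- Lemma B : off-diagonal block vanishes
  have lemB : ∀ x w u : V, ⟪w, x⟫ = 0 → ⟪w, Φ x⟫ = 0 → ⟪u, x⟫ = 0 → ⟪u, Φ x⟫ = 0 →
      ⟪Φ' x w, u⟫ = 0 := by
    intro x w u hwx hwPx hux huPx
    by_cases hw : w = 0
    · rw [hw, map_zero, inner_zero_left]
    have hww : ⟪w, w⟫ ≠ 0 := fun h0 => hw (inner_self_eq_zero.mp h0)
    set t : ℝ := ⟪u, Φ w⟫ / ⟪w, w⟫ with ht
    set u₀ : V := u - t • Φ w with hu₀
    have hu₀x : ⟪u₀, x⟫ = 0 := by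
      rw [hu₀, inner_sub_left, real_inner_smul_left, hskew, hwPx]
      simp [hux]
    have hu₀Px : ⟪u₀, Φ x⟫ = 0 := by
      rw [hu₀, inner_sub_left, real_inner_smul_left, hPP, hwx]
      simp [huPx]
    have hu₀Pw : ⟪u₀, Φ w⟫ = 0 := by
      rw [hu₀, inner_sub_left, real_inner_smul_left, hPP, ht]
      field_simp
      ring
    obtain ⟨y, hy0, hyx, hyPx, hyw, hyPw, hyu₀, hyPu₀⟩ :=
      exists_perp6 hdim x (Φ x) w (Φ w) u₀ (Φ u₀)
    have hwy : ⟪w, y⟫ = 0 := by rw [real_inner_comm]; exact hyw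
    have hwPy : ⟪w, Φ y⟫ = 0 := by rw [real_inner_comm, hskew, hyPw, neg_zero]
    have hu₀y : ⟪u₀, y⟫ = 0 := by rw [real_inner_comm]; exact hyu₀
    have hu₀Py : ⟪u₀, Φ y⟫ = 0 := by rw [real_inner_comm, hskew, hyPu₀, neg_zero]
    have h0 := lemA x y w u₀ hy0 hyx hyPx hwx hwPx hwy hwPy hu₀x hu₀Px hu₀y hu₀Py hu₀Pw
    have hu : u = u₀ + t • Φ w := by rw [hu₀]; abel
    rw [hu, inner_add_right, real_inner_smul_right, h0, hL0, mul_zero, add_zero]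
  -- conclusion
  intro x
  by_cases hx : x = 0
  · rw [hx]; exact map_zero Φ'
  have hxx : ⟪x, x⟫ ≠ 0 := fun h0 => hx (inner_self_eq_zero.mp h0)
  have hPxx : Φ' x (Φ x) = 0 := by
    rw [hΦ'anti, lemV x, map_zero, neg_zero]
  have hPperp : ∀ s : V, ⟪s, x⟫ = 0 → ⟪s, Φ x⟫ = 0 → Φ' x s = 0 := by
    intro s hsx hsPx
    have hTx : ⟪Φ' x s, x⟫ = 0 := by
      rw [hΦ'skew, lemV x, inner_zero_right, neg_zero]
    have hTPx : ⟪Φ' x s, Φ x⟫ = 0 := by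
      rw [hΦ'skew, hPxx, inner_zero_right, neg_zero]
    have hself : ⟪Φ' x s, Φ' x s⟫ = 0 := lemB x s (Φ' x s) hsx hsPx hTx hTPx
    exact inner_self_eq_zero.mp hself
  apply LinearMap.ext
  intro w
  simp only [LinearMap.zero_apply]
  set a : ℝ := ⟪w, x⟫ / ⟪x, x⟫ with ha
  set b : ℝ := ⟪w, Φ x⟫ / ⟪x, x⟫ with hb
  set s : V := w - a • x - b • Φ x with hs
  have hsx : ⟪s, x⟫ = 0 := by
    rw [hs, inner_sub_left, inner_sub_left, real_inner_smul_left, real_inner_smul_left,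
      hPd1, ha]
    field_simp
    ring
  have hsPx : ⟪s, Φ x⟫ = 0 := by
    rw [hs, inner_sub_left, inner_sub_left, real_inner_smul_left, real_inner_smul_left,
      hPd2, hPP, hb]
    field_simp
    ring
  have hw : w = s + a • x + b • Φ x := by rw [hs]; abel
  rw [hw, map_add, map_add, map_smul, map_smul, hPperp s hsx hsPx, lemV x, hPxx]
  simp
end
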